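/- For every ρ > 1, ∫_0^{π/2} I₀( (log ρ / 2)·cos θ )·cos θ dθ = (ρ − 1)/(√ρ · log ρ). -/

import Mathlib

/-!
Expanding `I₀` and integrating term by term (dominated by the series of `I₀(|c|)`), the Wallis
integral `∫₀^{π/2} cos^{2n+1} = 4ⁿ (n!)² / (2n+1)!` turns `∫₀^{π/2} I₀(c cos θ) cos θ dθ` into
`∑ c^{2n} / (2n+1)! = sinh c / c`. At `c = log ρ / 2` one has `sinh c = (ρ - 1) / (2√ρ)`.
-/

open MeasureTheory Filter

/-- The modified Bessel function of the first kind `I₀(x) = ∑ (x/2)^{2n} / (n!)²`. -/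
noncomputable def I0 (x : ℝ) : ℝ :=
  ∑' n : ℕ, (x / 2) ^ (2 * n) / (Nat.factorial n : ℝ) ^ 2

open Real Nat

theorem integral_cos_pow_two_mul_add_one (n : ℕ) :
    ∫ x in (0 : ℝ)..(π / 2), cos x ^ (2 * n + 1) = 4 ^ n * (n ! : ℝ) ^ 2 / (2 * n + 1)! := by
  induction n with
  | zero => simp
  | succ n ih =>
    rw [show 2 * (n + 1) + 1 = 2 * n + 1 + 2 by ring, integral_cos_pow, ih]
    simp only [cos_pi_div_two, sin_zero, ne_eq, add_eq_zero, one_ne_zero, and_false,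
      not_false_eq_true, zero_pow, zero_mul, mul_zero, sub_zero]
    rw [show 2 * n + 1 + 2 = 2 * n + 1 + 1 + 1 by ring, factorial_succ (2 * n + 1 + 1),
      factorial_succ (2 * n + 1), factorial_succ n]
    push_cast
    field_simp
    ring

theorem summable_I0_series (x : ℝ) :
    Summable fun n : ℕ => (x / 2) ^ (2 * n) / (n ! : ℝ) ^ 2 := by
  refine (Real.summable_pow_div_factorial ((x / 2) ^ 2)).of_nonneg_of_le
    (fun n => by rw [pow_mul]; positivity) fun n => ?_
  rw [pow_mul]
  have : (1 : ℝ) ≤ n ! := mod_cast n.factorial_pos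
  gcongr
  nlinarith

theorem hasSum_integral_I0_mul_cos (c : ℝ) :
    HasSum (fun n : ℕ => c ^ (2 * n) / ((2 * n + 1)! : ℝ))
      (∫ θ in (0 : ℝ)..(π / 2), I0 (c * cos θ) * cos θ) := by
  have hterm : ∀ n : ℕ, ∫ θ in (0 : ℝ)..(π / 2), (c * cos θ / 2) ^ (2 * n) / (n ! : ℝ) ^ 2 * cos θ
      = c ^ (2 * n) / ((2 * n + 1)! : ℝ) := by
    intro n
    have hrw : ∀ θ, (c * cos θ / 2) ^ (2 * n) / (n ! : ℝ) ^ 2 * cos θ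
        = (c / 2) ^ (2 * n) / (n ! : ℝ) ^ 2 * cos θ ^ (2 * n + 1) := fun θ => by ring
    rw [intervalIntegral.integral_congr fun θ _ => hrw θ, intervalIntegral.integral_const_mul,
      integral_cos_pow_two_mul_add_one, div_pow, pow_mul, pow_mul (2 : ℝ)]
    field_simp
    ring
  simp_rw [← hterm]
  refine intervalIntegral.hasSum_integral_of_dominated_convergence
    (fun n _ => (|c| / 2) ^ (2 * n) / (n ! : ℝ) ^ 2) (fun n => by fun_prop)
    (fun n => .of_forall fun θ _ => ?_) (.of_forall fun _ _ => summable_I0_series |c|)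
    intervalIntegrable_const
    (.of_forall fun θ _ => (summable_I0_series _).hasSum.mul_right (cos θ))
  have hcos : |cos θ| ≤ 1 := abs_cos_le_one θ
  simp only [norm_mul, norm_div, norm_pow, Real.norm_eq_abs, abs_two, Nat.abs_cast]
  calc (|c| * |cos θ| / 2) ^ (2 * n) / (n ! : ℝ) ^ 2 * |cos θ|
      ≤ (|c| * 1 / 2) ^ (2 * n) / (n ! : ℝ) ^ 2 * 1 := by gcongr
    _ = _ := by ring

theorem mul_integral_I0_mul_cos (c : ℝ) :
    c * ∫ θ in (0 : ℝ)..(π / 2), I0 (c * cos θ) * cos θ = sinh c := by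
  refine ((hasSum_integral_I0_mul_cos c).mul_left c).unique ?_
  have hodd : (fun n : ℕ => c * (c ^ (2 * n) / (2 * n + 1)!)) =
      fun n : ℕ => c ^ (2 * n + 1) / (2 * n + 1)! := by
    ext n
    ring
  exact hodd ▸ hasSum_sinh c

theorem sinh_log_div_two {ρ : ℝ} (hρ : 0 < ρ) : sinh (log ρ / 2) = (ρ - 1) / (2 * √ρ) := by
  have hs : 0 < √ρ := sqrt_pos.2 hρ
  rw [← log_sqrt hρ.le, sinh_log hs]
  field_simp
  rw [sq_sqrt hρ.le]

theorem stmt13 (ρ : ℝ) (hρ : 1 < ρ) :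
    ∫ θ in (0 : ℝ)..(Real.pi / 2), I0 ((Real.log ρ / 2) * Real.cos θ) * Real.cos θ
      = (ρ - 1) / (Real.sqrt ρ * Real.log ρ) := by
  have hlog : log ρ ≠ 0 := (log_pos hρ).ne'
  have h := mul_integral_I0_mul_cos (log ρ / 2)
  rw [sinh_log_div_two (by linarith)] at h
  field_simp at h ⊢
  linear_combination h
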